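/- Let X be a finite graph with vertex set Ω, π a correct partition of X, and e = e_{WL(X)_π} the twin parabolic of WL(X)_π. Then e is a twin equivalence of the graph X, the quotient coherent configuration WL(X)_π / e equals WL(X/e)_{π/e}, and π/e is a correct partition of the quotient graph X/e. -/

import Mathlib

open Set

universe u v

variable {Ω : Type*}

/-- The diagonal relation `1_Δ` of a set `Δ ⊆ Ω`. -/
def diagRel (Δ : Set Ω) : Set (Ω × Ω) := {p | p.1 = p.2 ∧ p.1 ∈ Δ}

/-- The number of points `γ` with `(p.1, γ) ∈ r` and `(γ, p.2) ∈ s`. -/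
noncomputable def interNum (r s : Set (Ω × Ω)) (p : Ω × Ω) : ℕ :=
  {γ : Ω | (p.1, γ) ∈ r ∧ (γ, p.2) ∈ s}.ncard

/-- A coherent configuration on `Ω`: a partition `S` of `Ω × Ω` such that the diagonal
is a union of classes, `S` is closed under transposition, and the intersection numbers
are well defined. -/
structure CoherentConfiguration (Ω : Type u) where
  S : Set (Set (Ω × Ω))
  isPartition : Setoid.IsPartition S
  diag_isRelation : ∃ T ⊆ S, ⋃₀ T = diagRel (Set.univ : Set Ω)
  swap_mem : ∀ s ∈ S, {p : Ω × Ω | (p.2, p.1) ∈ s} ∈ S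
  coherent : ∀ r ∈ S, ∀ s ∈ S, ∀ t ∈ S, ∀ p ∈ t, ∀ q ∈ t,
    interNum r s p = interNum r s q

namespace CoherentConfiguration

/-- A relation of `X` is a union of basis relations of `X`. -/
def IsRelation (X : CoherentConfiguration Ω) (r : Set (Ω × Ω)) : Prop :=
  ∃ T ⊆ X.S, ⋃₀ T = r

/-- A fiber of `X` is a set `Δ` with `1_Δ` a basis relation. -/
def IsFiber (X : CoherentConfiguration Ω) (Δ : Set Ω) : Prop :=
  diagRel Δ ∈ X.S

end CoherentConfiguration

/-- `X ≤ Y` iff every relation of `X` is a relation of `Y`. -/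
def CCle (X Y : CoherentConfiguration Ω) : Prop :=
  ∀ r, X.IsRelation r → Y.IsRelation r

/-- The arc set of a graph, as a set of ordered pairs. -/
def adjRel (G : SimpleGraph Ω) : Set (Ω × Ω) := {p | G.Adj p.1 p.2}

/-- `X = WL(G)`: the smallest coherent configuration having the arc set of `G`
among its relations. -/
def IsWL (G : SimpleGraph Ω) (X : CoherentConfiguration Ω) : Prop :=
  X.IsRelation (adjRel G) ∧
    ∀ Y : CoherentConfiguration Ω, Y.IsRelation (adjRel G) → CCle X Y

/-- `X = WL(G)_π`: the smallest coherent configuration having the arc set of `G`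
and every `1_Δ`, `Δ ∈ π`, among its relations. -/
def IsWLPart (G : SimpleGraph Ω) (π : Set (Set Ω)) (X : CoherentConfiguration Ω) : Prop :=
  X.IsRelation (adjRel G) ∧ (∀ Δ ∈ π, X.IsRelation (diagRel Δ)) ∧
    ∀ Y : CoherentConfiguration Ω, Y.IsRelation (adjRel G) →
      (∀ Δ ∈ π, Y.IsRelation (diagRel Δ)) → CCle X Y

/-- A graph is distance-hereditary if in every connected induced subgraph the distance
function is the same as in the graph itself. -/
def DistanceHereditary {V : Type*} (G : SimpleGraph V) : Prop :=
  ∀ s : Set V, (G.induce s).Connected →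
    ∀ u v : s, (G.induce s).dist u v = G.dist u.1 v.1

/-- Two vertices are twins in a graph if every other vertex is adjacent to both
or to neither. -/
def IsTwin (G : SimpleGraph Ω) (a b : Ω) : Prop :=
  ∀ γ, γ ≠ a → γ ≠ b → (G.Adj γ a ↔ G.Adj γ b)

/-- Two points are `X`-twins if for every other point `γ`, the basis relation containing
`(γ, a)` coincides with the one containing `(γ, b)`. -/
def XTwin (X : CoherentConfiguration Ω) (a b : Ω) : Prop :=
  ∀ γ, γ ≠ a → γ ≠ b → ∀ s ∈ X.S, ((γ, a) ∈ s ↔ (γ, b) ∈ s)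

/-- The relation `e_X` of being `X`-twins, as a set of pairs. -/
def twinRel (X : CoherentConfiguration Ω) : Set (Ω × Ω) := {p | XTwin X p.1 p.2}

/-- An equivalence relation on `Ω`, given as a set of pairs. -/
def IsEquivSet (e : Set (Ω × Ω)) : Prop :=
  (∀ a, (a, a) ∈ e) ∧ (∀ a b, (a, b) ∈ e → (b, a) ∈ e) ∧
    (∀ a b c, (a, b) ∈ e → (b, c) ∈ e → (a, c) ∈ e)

/-- A parabolic of `X` is an equivalence relation which is a relation of `X`. -/
def IsParabolic (X : CoherentConfiguration Ω) (e : Set (Ω × Ω)) : Prop :=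
  IsEquivSet e ∧ X.IsRelation e

/-- The dot product (composition) of two relations. -/
def relComp (r s : Set (Ω × Ω)) : Set (Ω × Ω) :=
  {p | ∃ c, (p.1, c) ∈ r ∧ (c, p.2) ∈ s}

/-- An algebraic isomorphism between coherent configurations: a bijection between the
sets of basis relations preserving the intersection numbers. -/
structure AlgIso {Ω : Type u} {Ω' : Type v} (X : CoherentConfiguration Ω)
    (X' : CoherentConfiguration Ω') where
  toFun : Set (Ω × Ω) → Set (Ω' × Ω')
  bijOn : Set.BijOn toFun X.S X'.S
  card_eq : ∀ r ∈ X.S, ∀ s ∈ X.S, ∀ t ∈ X.S, ∀ p ∈ t, ∀ p' ∈ toFun t,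
      interNum r s p = interNum (toFun r) (toFun s) p'

/-- `X` is separable: every algebraic isomorphism from `X` to another coherent
configuration is induced by a bijection of the point sets. -/
def CCSeparable {Ω : Type u} (X : CoherentConfiguration Ω) : Prop :=
  ∀ (Ω' : Type u), Finite Ω' → ∀ (X' : CoherentConfiguration Ω') (φ : AlgIso X X'),
    ∃ f : Ω → Ω', Function.Bijective f ∧ ∀ s ∈ X.S, φ.toFun s = Prod.map f f '' s

/-- `Ω₋(m)`. -/
def OmegaMinus (m : Set (Ω × Ω)) : Set Ω := {a | ∃ b, (a, b) ∈ m}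

/-- `Ω₊(m)`. -/
def OmegaPlus (m : Set (Ω × Ω)) : Set Ω := {b | ∃ a, (a, b) ∈ m}

/-- A matching of `X`: an irreflexive basis relation of valency one in both directions. -/
def IsMatchingCC (X : CoherentConfiguration Ω) (m : Set (Ω × Ω)) : Prop :=
  m ∈ X.S ∧ (∀ p ∈ m, p.1 ≠ p.2) ∧
    (∀ a b c, (a, b) ∈ m → (a, c) ∈ m → b = c) ∧
    (∀ a b c, (a, c) ∈ m → (b, c) ∈ m → a = b)

/-- A pendant matching of `X` with respect to the graph `G`. -/
def IsPendantMatching (G : SimpleGraph Ω) (X : CoherentConfiguration Ω)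
    (m : Set (Ω × Ω)) : Prop :=
  IsMatchingCC X m ∧ OmegaMinus m ≠ OmegaPlus m ∧
    ∀ p ∈ m, G.Adj p.1 p.2 ∧ ∀ c, G.Adj p.1 c → c = p.2

/-- A twin matching of `X` with respect to the graph `G`. -/
def IsTwinMatching (G : SimpleGraph Ω) (X : CoherentConfiguration Ω)
    (m : Set (Ω × Ω)) : Prop :=
  IsMatchingCC X m ∧ OmegaMinus m ≠ OmegaPlus m ∧ ∀ p ∈ m, IsTwin G p.1 p.2

/-- The quotient graph of `G` modulo a (twin) equivalence relation `r`: two distinct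
classes are adjacent iff every vertex of one is adjacent to every vertex of the other. -/
def quotGraph (G : SimpleGraph Ω) (r : Ω → Ω → Prop) : SimpleGraph (Quot r) where
  Adj c d := c ≠ d ∧ ∀ a b : Ω, Quot.mk r a = c → Quot.mk r b = d → G.Adj a b
  symm := ⟨fun _ _ h => ⟨h.1.symm, fun a b ha hb => (h.2 b a hb ha).symm⟩⟩
  loopless := ⟨fun _ h => h.1 rfl⟩

/-- The restriction of a relation on `Ω` to the complement of `Δ`. -/
def restrictRel (Δ : Set Ω) (s : Set (Ω × Ω)) : Set (↥(Δᶜ) × ↥(Δᶜ)) :=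
  {p | ((p.1 : Ω), (p.2 : Ω)) ∈ s}

/-- The restriction of a subset of `Ω` to the complement of `Δ`. -/
def restrictSet (Δ Γ : Set Ω) : Set ↥(Δᶜ) := {x | (x : Ω) ∈ Γ}

/-! Twins of `X` form a parabolic: whether a pair consists of twins is decided by its basis
relation (a count of intersection numbers), so the images of the basis relations of `X`
partition `Ω/e × Ω/e` into a coherent configuration `X/e`. Twins of `X` are twins of `G`, so
`X/e` contains the arcs of `G/e` and the diagonals of `π/e`, whence `Y ≤ X/e`. Conversely,
pulling `Y` back to `Ω` (splitting each preimage into its diagonal and off-diagonal part) gives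
a coherent configuration, because the twin classes over a fiber of `Y` all have the same size.
It contains the arcs of `G` and the fibers of `X`, i.e. the classes of the correct partition
`π`, so it lies above `X`, and every image of a basis relation of `X` is a relation of `Y`.
If all points are twins, `Ω/e` has at most one point and everything is trivial. -/

section Cardinality

variable {α β : Type*}

theorem ncard_eq_ncard_of_subset_singleton {A : Set α} {B : Set β} {x : α} {y : β}
    (hA : A ⊆ {x}) (hB : B ⊆ {y}) (h : x ∈ A ↔ y ∈ B) : A.ncard = B.ncard := by
  rcases subset_singleton_iff_eq.1 hA with rfl | rfl <;>
    rcases subset_singleton_iff_eq.1 hB with rfl | rfl <;> simp_all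

theorem ncard_inter_pair_eq {E : Set α} {E' : Set β} {x y : α} {x' y' : β}
    (hx : x ∈ E ↔ x' ∈ E') (hy : y ∈ E ↔ y' ∈ E') (hxy : x = y ↔ x' = y') :
    (E ∩ {x, y}).ncard = (E' ∩ {x', y'}).ncard := by
  have hsingle : ∀ {z z'}, (z ∈ E ↔ z' ∈ E') → (E ∩ {z}).ncard = (E' ∩ {z'}).ncard :=
    fun h => ncard_eq_ncard_of_subset_singleton inter_subset_right inter_subset_right
      (by simpa using h)
  rcases eq_or_ne x y with rfl | hne
  · obtain rfl : x' = y' := hxy.1 rfl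
    simpa using hsingle hx
  have hne' : x' ≠ y' := fun h => hne (hxy.2 h)
  rw [insert_eq, insert_eq, inter_union_distrib_left, inter_union_distrib_left,
    ncard_union_eq ((disjoint_singleton.2 hne).mono inter_subset_right inter_subset_right),
    ncard_union_eq ((disjoint_singleton.2 hne').mono inter_subset_right inter_subset_right),
    hsingle hx, hsingle hy]

theorem ncard_preimage_eq_mul [Finite α] [Finite β] (f : α → β) {A : Set β} {k : ℕ}
    (h : ∀ c ∈ A, (f ⁻¹' {c}).ncard = k) : (f ⁻¹' A).ncard = k * A.ncard := by
  rw [← biUnion_preimage_singleton,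
    A.toFinite.ncard_biUnion (fun _ _ => toFinite _) (pairwiseDisjoint_fiber f A),
    finsum_mem_congr rfl h, finsum_mem_eq_finite_toFinset_sum _ A.toFinite, Finset.sum_const,
    smul_eq_mul, mul_comm, ncard_eq_toFinset_card A]

end Cardinality

theorem mem_diagRel {Δ : Set Ω} {a b : Ω} : (a, b) ∈ diagRel Δ ↔ a = b ∧ a ∈ Δ :=
  Iff.rfl

theorem diagRel_injective : Function.Injective (diagRel : Set Ω → Set (Ω × Ω)) :=
  fun Δ Δ' h => Set.ext fun x =>
    ⟨fun hx => (h ▸ ⟨rfl, hx⟩ : (x, x) ∈ diagRel Δ').2,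
      fun hx => (h.symm ▸ ⟨rfl, hx⟩ : (x, x) ∈ diagRel Δ).2⟩

namespace CoherentConfiguration

variable (X : CoherentConfiguration Ω)

theorem exists_mem (p : Ω × Ω) : ∃ s ∈ X.S, p ∈ s := by
  obtain ⟨s, ⟨hs, hp⟩, -⟩ := X.isPartition.2 p
  exact ⟨s, hs, hp⟩

variable {X}

theorem eq_of_mem {s s' : Set (Ω × Ω)} {p : Ω × Ω} (hs : s ∈ X.S) (hs' : s' ∈ X.S)
    (hp : p ∈ s) (hp' : p ∈ s') : s = s' := by
  obtain ⟨u, -, hu⟩ := X.isPartition.2 p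
  rw [hu s ⟨hs, hp⟩, hu s' ⟨hs', hp'⟩]

theorem mem_iff_mem {s t : Set (Ω × Ω)} {p q : Ω × Ω} (hs : s ∈ X.S) (ht : t ∈ X.S)
    (hp : p ∈ t) (hq : q ∈ t) : p ∈ s ↔ q ∈ s :=
  ⟨fun h => X.eq_of_mem ht hs hp h ▸ hq, fun h => X.eq_of_mem ht hs hq h ▸ hp⟩

theorem nonempty_of_mem {s : Set (Ω × Ω)} (hs : s ∈ X.S) : s.Nonempty :=
  nonempty_iff_ne_empty.2 fun h => X.isPartition.1 (h ▸ hs)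

theorem fst_eq_snd_of_mem {s : Set (Ω × Ω)} (hs : s ∈ X.S) {x : Ω} (hx : (x, x) ∈ s)
    {p : Ω × Ω} (hp : p ∈ s) : p.1 = p.2 := by
  obtain ⟨T, hT, hTd⟩ := X.diag_isRelation
  have hdiag : ∀ q ∈ ⋃₀ T, q.1 = q.2 := fun q hq => (hTd ▸ hq : q ∈ diagRel univ).1
  obtain ⟨t, htT, hxt⟩ : (x, x) ∈ ⋃₀ T := hTd ▸ ⟨rfl, trivial⟩
  exact hdiag p ⟨t, htT, X.eq_of_mem hs (hT htT) hx hxt ▸ hp⟩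

theorem fst_ne_snd_of_mem {s : Set (Ω × Ω)} (hs : s ∈ X.S) {a b : Ω} (hab : (a, b) ∈ s)
    (hne : a ≠ b) {p : Ω × Ω} (hp : p ∈ s) : p.1 ≠ p.2 := by
  obtain ⟨x, y⟩ := p
  rintro (rfl : x = y)
  exact hne (X.fst_eq_snd_of_mem hs hp hab)

theorem eq_diagRel_of_mem {s : Set (Ω × Ω)} (hs : s ∈ X.S) {x : Ω} (hx : (x, x) ∈ s) :
    s = diagRel {y | (y, y) ∈ s} := by
  ext ⟨a, b⟩
  refine ⟨fun h => ?_, fun ⟨(h : a = b), ha⟩ => h ▸ ha⟩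
  obtain rfl : a = b := X.fst_eq_snd_of_mem hs hx h
  exact ⟨rfl, h⟩

variable (X) in
theorem exists_isFiber_mem (x : Ω) : ∃ Δ, X.IsFiber Δ ∧ x ∈ Δ := by
  obtain ⟨s, hs, hx⟩ := X.exists_mem (x, x)
  refine ⟨{y | (y, y) ∈ s}, ?_, hx⟩
  rw [IsFiber, ← X.eq_diagRel_of_mem hs hx]
  exact hs

theorem isRelation_iff {R : Set (Ω × Ω)} :
    X.IsRelation R ↔ ∀ s ∈ X.S, ∀ p ∈ s, p ∈ R → s ⊆ R := by
  constructor
  · rintro ⟨T, hT, rfl⟩ s hs p hp ⟨t, htT, hpt⟩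
    exact X.eq_of_mem hs (hT htT) hp hpt ▸ subset_sUnion_of_mem htT
  · intro h
    refine ⟨{s | s ∈ X.S ∧ s ⊆ R}, fun s hs => hs.1, subset_antisymm
      (sUnion_subset fun s hs => hs.2) fun p hp => ?_⟩
    obtain ⟨s, hs, hps⟩ := X.exists_mem p
    exact ⟨s, ⟨hs, h s hs p hps hp⟩, hps⟩

theorem IsRelation.subset {R s : Set (Ω × Ω)} (hR : X.IsRelation R) (hs : s ∈ X.S)
    {p : Ω × Ω} (hp : p ∈ s) (hpR : p ∈ R) : s ⊆ R :=
  isRelation_iff.1 hR s hs p hp hpR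

theorem isRelation_of_mem {s : Set (Ω × Ω)} (hs : s ∈ X.S) : X.IsRelation s :=
  ⟨{s}, singleton_subset_iff.2 hs, sUnion_singleton s⟩

theorem IsRelation.diff {R R' : Set (Ω × Ω)} (hR : X.IsRelation R) (hR' : X.IsRelation R') :
    X.IsRelation (R \ R') :=
  isRelation_iff.2 fun _ hs _ hp ⟨hpR, hpR'⟩ _ hq =>
    ⟨hR.subset hs hp hpR hq, fun hqR' => hpR' (hR'.subset hs hq hqR' hp)⟩

end CoherentConfiguration

open CoherentConfiguration

theorem CCle.of_forall_isRelation {X Y : CoherentConfiguration Ω}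
    (h : ∀ s ∈ X.S, Y.IsRelation s) : CCle X Y := by
  rintro _ ⟨T, hT, rfl⟩
  refine isRelation_iff.2 fun t ht p hpt ⟨s, hsT, hps⟩ => ?_
  exact (h s (hT hsT)).subset ht hpt hps |>.trans (subset_sUnion_of_mem hsT)

theorem CCle.S_eq {X Y : CoherentConfiguration Ω} (hXY : CCle X Y) (hYX : CCle Y X) :
    X.S = Y.S := by
  suffices h : ∀ {X Y : CoherentConfiguration Ω}, CCle X Y → CCle Y X → X.S ⊆ Y.S from
    subset_antisymm (h hXY hYX) (h hYX hXY)
  intro X Y hXY hYX s hs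
  obtain ⟨p, hp⟩ := X.nonempty_of_mem hs
  obtain ⟨t, ht, hpt⟩ := Y.exists_mem p
  have hts : t ⊆ s := (hXY s (isRelation_of_mem hs)).subset ht hpt hp
  have hst : s ⊆ t := (hYX t (isRelation_of_mem ht)).subset hs hp hpt
  exact subset_antisymm hst hts ▸ ht

namespace CoherentConfiguration

variable [Finite Ω] {X : CoherentConfiguration Ω}

theorem interNum_pos_iff {r s : Set (Ω × Ω)} {p : Ω × Ω} :
    0 < interNum r s p ↔ ∃ γ, (p.1, γ) ∈ r ∧ (γ, p.2) ∈ s :=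
  ncard_pos

theorem IsFiber.fst_mem {Δ : Set Ω} (hΔ : X.IsFiber Δ) {s : Set (Ω × Ω)} (hs : s ∈ X.S)
    {a b : Ω} (hab : (a, b) ∈ s) (ha : a ∈ Δ) {p : Ω × Ω} (hp : p ∈ s) : p.1 ∈ Δ := by
  have hpos : 0 < interNum (diagRel Δ) s p := by
    rw [← X.coherent _ hΔ _ hs _ hs _ hab _ hp]
    exact interNum_pos_iff.2 ⟨a, ⟨rfl, ha⟩, hab⟩
  obtain ⟨_, ⟨-, hpΔ⟩, -⟩ := interNum_pos_iff.1 hpos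
  exact hpΔ

theorem IsFiber.snd_mem {Δ : Set Ω} (hΔ : X.IsFiber Δ) {s : Set (Ω × Ω)} (hs : s ∈ X.S)
    {a b : Ω} (hab : (a, b) ∈ s) (hb : b ∈ Δ) {p : Ω × Ω} (hp : p ∈ s) : p.2 ∈ Δ :=
  hΔ.fst_mem (X.swap_mem s hs) (a := b) (b := a) hab hb (p := p.swap) hp

theorem IsFiber.exists_mem {Δ : Set Ω} (hΔ : X.IsFiber Δ) {s : Set (Ω × Ω)} (hs : s ∈ X.S)
    {a b : Ω} (hab : (a, b) ∈ s) (ha : a ∈ Δ) {x : Ω} (hx : x ∈ Δ) : ∃ y, (x, y) ∈ s := by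
  have hpos : 0 < interNum s {p | (p.2, p.1) ∈ s} (x, x) := by
    rw [← X.coherent _ hs _ (X.swap_mem s hs) _ hΔ (a, a) ⟨rfl, ha⟩ _ ⟨rfl, hx⟩]
    exact interNum_pos_iff.2 ⟨b, hab, hab⟩
  obtain ⟨y, hxy, -⟩ := interNum_pos_iff.1 hpos
  exact ⟨y, hxy⟩

/-- For each `γ` at most one pair in `P` applies, so the count is a sum of intersection
numbers. -/
theorem ncard_paths_eq {P : Set (Set (Ω × Ω) × Set (Ω × Ω))} (hP : P ⊆ X.S ×ˢ X.S)
    {t : Set (Ω × Ω)} (ht : t ∈ X.S) {p q : Ω × Ω} (hp : p ∈ t) (hq : q ∈ t) :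
    {γ | ∃ rs ∈ P, (p.1, γ) ∈ rs.1 ∧ (γ, p.2) ∈ rs.2}.ncard =
      {γ | ∃ rs ∈ P, (q.1, γ) ∈ rs.1 ∧ (γ, q.2) ∈ rs.2}.ncard := by
  have hunion : ∀ w : Ω × Ω, {γ | ∃ rs ∈ P, (w.1, γ) ∈ rs.1 ∧ (γ, w.2) ∈ rs.2} =
      ⋃ rs ∈ P, {γ | (w.1, γ) ∈ rs.1 ∧ (γ, w.2) ∈ rs.2} := fun w => by
    ext γ
    simp only [mem_ofPred_eq, mem_iUnion₂, exists_prop]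
  have hdisj : ∀ w : Ω × Ω,
      P.PairwiseDisjoint fun rs => {γ | (w.1, γ) ∈ rs.1 ∧ (γ, w.2) ∈ rs.2} := by
    intro w rs hrs rs' hrs' hne
    refine disjoint_left.2 fun γ h h' => hne (Prod.ext ?_ ?_)
    · exact X.eq_of_mem (hP hrs).1 (hP hrs').1 h.1 h'.1
    · exact X.eq_of_mem (hP hrs).2 (hP hrs').2 h.2 h'.2
  rw [hunion, hunion, P.toFinite.ncard_biUnion (fun _ _ => toFinite _) (hdisj p),
    P.toFinite.ncard_biUnion (fun _ _ => toFinite _) (hdisj q)]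
  exact finsum_mem_congr rfl fun rs hrs => X.coherent _ (hP hrs).1 _ (hP hrs).2 _ ht _ hp _ hq

theorem interNum_eq_of_isRelation {R R' : Set (Ω × Ω)} (hR : X.IsRelation R)
    (hR' : X.IsRelation R') {t : Set (Ω × Ω)} (ht : t ∈ X.S) {p q : Ω × Ω} (hp : p ∈ t)
    (hq : q ∈ t) : interNum R R' p = interNum R R' q := by
  let P : Set (Set (Ω × Ω) × Set (Ω × Ω)) :=
    {rs | rs.1 ∈ X.S ∧ rs.2 ∈ X.S ∧ rs.1 ⊆ R ∧ rs.2 ⊆ R'}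
  have hpaths : ∀ w : Ω × Ω, interNum R R' w =
      {γ | ∃ rs ∈ P, (w.1, γ) ∈ rs.1 ∧ (γ, w.2) ∈ rs.2}.ncard := by
    intro w
    unfold interNum
    congr 1
    ext γ
    constructor
    · rintro ⟨h₁, h₂⟩
      obtain ⟨r, hr, h₁r⟩ := X.exists_mem (w.1, γ)
      obtain ⟨s, hs, h₂s⟩ := X.exists_mem (γ, w.2)
      exact ⟨(r, s), ⟨hr, hs, hR.subset hr h₁r h₁, hR'.subset hs h₂s h₂⟩, h₁r, h₂s⟩
    · rintro ⟨rs, ⟨-, -, hrR, hsR'⟩, h₁, h₂⟩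
      exact ⟨hrR h₁, hsR' h₂⟩
  rw [hpaths, hpaths]
  exact ncard_paths_eq (fun rs h => ⟨h.1, h.2.1⟩) ht hp hq

theorem IsRelation.relComp {R R' : Set (Ω × Ω)} (hR : X.IsRelation R)
    (hR' : X.IsRelation R') : X.IsRelation (relComp R R') := by
  refine isRelation_iff.2 fun u hu p hp hpR q hq => interNum_pos_iff.1 ?_
  rw [← interNum_eq_of_isRelation hR hR' hu hp hq]
  exact interNum_pos_iff.2 hpR

end CoherentConfiguration

namespace XTwin

variable {X : CoherentConfiguration Ω} {a b c : Ω}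

variable (X) in
theorem refl (a : Ω) : XTwin X a a := fun _ _ _ _ _ => Iff.rfl

theorem symm (h : XTwin X a b) : XTwin X b a := fun γ hb ha s hs => (h γ ha hb s hs).symm

theorem fst_mem_iff (h : XTwin X a b) {γ : Ω} (ha : γ ≠ a) (hb : γ ≠ b)
    {s : Set (Ω × Ω)} (hs : s ∈ X.S) : (a, γ) ∈ s ↔ (b, γ) ∈ s :=
  h γ ha hb _ (X.swap_mem s hs)

theorem isTwin {G : SimpleGraph Ω} (hG : X.IsRelation (adjRel G)) (h : XTwin X a b) :
    IsTwin G a b := by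
  obtain ⟨T, hT, hTG⟩ := hG
  intro γ ha hb
  change (γ, a) ∈ adjRel G ↔ (γ, b) ∈ adjRel G
  simp only [← hTG, mem_sUnion]
  exact exists_congr fun t => and_congr_right fun htT => h γ ha hb t (hT htT)

theorem exists_ne_ne (hnt : ∃ x y, ¬ XTwin X x y) (h : XTwin X a b) :
    ∃ γ, γ ≠ a ∧ γ ≠ b := by
  obtain ⟨x, y, hxy⟩ := hnt
  by_contra! hab
  have hγ : ∀ γ, γ = a ∨ γ = b := fun γ => (eq_or_ne γ a).imp_right (hab γ)
  rcases hγ x with rfl | rfl <;> rcases hγ y with rfl | rfl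
  exacts [hxy (refl X _), hxy h, hxy h.symm, hxy (refl X _)]

theorem adj_of_adj {G : SimpleGraph Ω} (hG : X.IsRelation (adjRel G)) {x y a b : Ω}
    (hxy : G.Adj x y) (hxa : XTwin X x a) (hyb : XTwin X y b) (hab : ¬ XTwin X a b) :
    G.Adj a b := by
  have hxb : G.Adj x b := by
    refine (hyb.isTwin hG x (G.ne_of_adj hxy) ?_).1 hxy
    rintro rfl
    exact hab hxa.symm
  refine ((hxa.isTwin hG b (G.ne_of_adj hxb).symm ?_).1 hxb.symm).symm
  rintro rfl
  exact hab (refl X b)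

variable [Finite Ω]

/-- The one instance of transitivity not covered by the definition: the test point is the
middle one. The basis relation of `(a, b)` also contains `(a, c)` and `(b, c)`, which forces
it to be symmetric. -/
theorem mem_of_mem_of_trans (hab : a ≠ b) (hbc : b ≠ c) (hac : a ≠ c) (h₁ : XTwin X a b)
    (h₂ : XTwin X b c) {s : Set (Ω × Ω)} (hs : s ∈ X.S) (hba : (b, a) ∈ s) : (b, c) ∈ s := by
  obtain ⟨u, hu, habu⟩ := X.exists_mem (a, b)
  have hacu : (a, c) ∈ u := (h₂ a hab hac u hu).1 habu
  have hbcu : (b, c) ∈ u := (h₁.fst_mem_iff (Ne.symm hac) (Ne.symm hbc) hu).1 hacu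
  have hsymm : {p : Ω × Ω | (p.2, p.1) ∈ u} = u := by
    have hpos : 0 < interNum u u (a, b) := by
      rw [X.coherent _ hu _ hu _ hu _ habu _ hacu]
      exact interNum_pos_iff.2 ⟨b, habu, hbcu⟩
    obtain ⟨γ, haγ, hγb⟩ := interNum_pos_iff.1 hpos
    have hoff : ∀ {p}, p ∈ u → p.1 ≠ p.2 := X.fst_ne_snd_of_mem hu habu hab
    exact X.eq_of_mem (X.swap_mem u hu) hu
      ((h₁ γ (hoff haγ).symm (hoff hγb) _ (X.swap_mem u hu)).1 haγ) hγb
  rw [X.eq_of_mem hs (X.swap_mem u hu) hba habu, hsymm]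
  exact hbcu

theorem trans (h₁ : XTwin X a b) (h₂ : XTwin X b c) : XTwin X a c := by
  rcases eq_or_ne a b with rfl | hab
  · exact h₂
  rcases eq_or_ne b c with rfl | hbc
  · exact h₁
  rcases eq_or_ne a c with rfl | hac
  · exact refl X a
  intro γ hγa hγc s hs
  rcases eq_or_ne γ b with rfl | hγb
  · exact ⟨mem_of_mem_of_trans hab hbc hac h₁ h₂ hs,
      mem_of_mem_of_trans hbc.symm hab.symm hac.symm h₂.symm h₁.symm hs⟩
  · exact (h₁ γ hγa hγb s hs).trans (h₂ γ hγb hγc s hs)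

theorem mem_of_isFiber (hnt : ∃ x y, ¬ XTwin X x y) (h : XTwin X a b) {Δ : Set Ω}
    (hΔ : X.IsFiber Δ) (ha : a ∈ Δ) : b ∈ Δ := by
  obtain ⟨γ, hγa, hγb⟩ := exists_ne_ne hnt h
  obtain ⟨r, hr, hγr⟩ := X.exists_mem (γ, a)
  have hpos : 0 < interNum r (diagRel Δ) (γ, b) := by
    rw [← X.coherent _ hr _ hΔ _ hr _ hγr _ ((h γ hγa hγb r hr).1 hγr)]
    exact interNum_pos_iff.2 ⟨a, hγr, rfl, ha⟩
  obtain ⟨δ, -, hδb, hδ⟩ := interNum_pos_iff.1 hpos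
  rwa [show δ = b from hδb] at hδ

/-- Being twins depends only on the basis relation containing the pair: for `x ≠ y` the
points `γ` with `(γ, x)` and `(γ, y)` of the same colour are counted by intersection numbers,
and `x, y` are twins iff these are all points other than `x` and `y`. -/
theorem of_mem {t : Set (Ω × Ω)} (ht : t ∈ X.S) {a b a' b' : Ω} (hab : (a, b) ∈ t)
    (h : XTwin X a b) (hab' : (a', b') ∈ t) : XTwin X a' b' := by
  rcases eq_or_ne a b with rfl | hne
  · obtain rfl : a' = b' := X.fst_eq_snd_of_mem ht hab hab'
    exact refl X a'
  have hne' : a' ≠ b' := X.fst_ne_snd_of_mem ht hab hne hab'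
  let W : Ω → Ω → Set Ω := fun x y => {γ | ∃ u ∈ X.S, (γ, x) ∈ u ∧ (γ, y) ∈ u}
  have hW : ∀ {x y}, x ≠ y → W x y ⊆ {x, y}ᶜ := by
    rintro x y hxy γ ⟨u, hu, hx, hy⟩ (rfl | rfl)
    · exact hxy (X.fst_eq_snd_of_mem hu hx hy)
    · exact hxy (X.fst_eq_snd_of_mem hu hy hx).symm
  have hcard : (W a b).ncard = (W a' b').ncard := by
    let P := (fun u => ({p : Ω × Ω | (p.2, p.1) ∈ u}, u)) '' X.S
    have hWP : ∀ w : Ω × Ω, W w.1 w.2 = {γ | ∃ rs ∈ P, (w.1, γ) ∈ rs.1 ∧ (γ, w.2) ∈ rs.2} :=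
      fun w => by ext γ; simp [W, P]
    rw [hWP (a, b), hWP (a', b')]
    refine X.ncard_paths_eq ?_ ht hab hab'
    rintro _ ⟨u, hu, rfl⟩
    exact ⟨X.swap_mem u hu, hu⟩
  have hWab : W a b = {a, b}ᶜ := by
    refine subset_antisymm (hW hne) fun γ hγ => ?_
    simp only [mem_compl_iff, mem_insert_iff, mem_singleton_iff, not_or] at hγ
    obtain ⟨u, hu, hγu⟩ := X.exists_mem (γ, a)
    exact ⟨u, hu, hγu, (h γ hγ.1 hγ.2 u hu).1 hγu⟩
  have hWab' : W a' b' = {a', b'}ᶜ := by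
    refine eq_of_subset_of_ncard_le (hW hne') ?_
    have h₁ := ncard_add_ncard_compl ({a, b} : Set Ω)
    have h₂ := ncard_add_ncard_compl ({a', b'} : Set Ω)
    rw [ncard_pair hne] at h₁
    rw [ncard_pair hne'] at h₂
    rw [← hcard, hWab]
    omega
  intro γ hγa hγb s hs
  obtain ⟨u, hu, hγa', hγb'⟩ : γ ∈ W a' b' := by
    rw [hWab']
    simp [hγa, hγb]
  exact X.mem_iff_mem hs hu hγa' hγb'

theorem mem_of_mem {s : Set (Ω × Ω)} (hs : s ∈ X.S) {x y x' y' : Ω} (h : (x', y') ∈ s)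
    (hx : XTwin X x x') (hy : XTwin X y y') (hxy : ¬ XTwin X x y) : (x, y) ∈ s := by
  have hx'y : x' ≠ y := fun h => hxy (h ▸ hx)
  have hx'y' : x' ≠ y' := fun h => hxy (hx.trans (h ▸ hy.symm))
  have hyx : y ≠ x := fun h => hxy (h ▸ refl X y)
  exact (hx.fst_mem_iff hyx hx'y.symm hs).2 ((hy x' hx'y hx'y' s hs).2 h)

theorem exists_mem_of_mem (hnt : ∃ x y, ¬ XTwin X x y) {r : Set (Ω × Ω)} (hr : r ∈ X.S)
    {a a₁ c : Ω} (h : (a₁, c) ∈ r) (ha : XTwin X a a₁) : ∃ c', XTwin X c c' ∧ (a, c') ∈ r := by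
  by_cases hc : c ≠ a ∧ c ≠ a₁
  · exact ⟨c, refl X c, (ha.fst_mem_iff hc.1 hc.2 hr).2 h⟩
  have hca₁ : XTwin X a₁ c := by
    rcases eq_or_ne c a with rfl | hca
    · exact ha.symm
    · rw [show c = a₁ by tauto]
      exact refl X a₁
  obtain ⟨Δ, hΔ, ha₁Δ⟩ := X.exists_isFiber_mem a₁
  obtain ⟨c', hc'⟩ := hΔ.exists_mem hr h ha₁Δ (ha.symm.mem_of_isFiber hnt hΔ ha₁Δ)
  exact ⟨c', hca₁.symm.trans (ha.symm.trans (of_mem hr h hca₁ hc')), hc'⟩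

end XTwin

section Twins

variable [Finite Ω]

theorem equivalence_xTwin (X : CoherentConfiguration Ω) : Equivalence (XTwin X) :=
  ⟨XTwin.refl X, XTwin.symm, XTwin.trans⟩

theorem isEquivSet_twinRel (X : CoherentConfiguration Ω) : IsEquivSet (twinRel X) :=
  ⟨XTwin.refl X, fun _ _ => XTwin.symm, fun _ _ _ => XTwin.trans⟩

theorem isRelation_twinRel (X : CoherentConfiguration Ω) : X.IsRelation (twinRel X) :=
  isRelation_iff.2 fun _ hs _ hp hpe _ hq => XTwin.of_mem hs hp hpe hq

theorem ncard_setOf_xTwin_eq {X : CoherentConfiguration Ω} {Δ : Set Ω} (hΔ : X.IsFiber Δ)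
    {x y : Ω} (hx : x ∈ Δ) (hy : y ∈ Δ) :
    {z | XTwin X z x}.ncard = {z | XTwin X z y}.ncard := by
  have hcls : ∀ w, {z | XTwin X z w} =
      {γ | ((w, w).1, γ) ∈ twinRel X ∧ (γ, (w, w).2) ∈ twinRel X} :=
    fun w => Set.ext fun z => ⟨fun h => ⟨h.symm, h⟩, fun h => h.2⟩
  rw [hcls x, hcls y]
  exact interNum_eq_of_isRelation (isRelation_twinRel X) (isRelation_twinRel X) hΔ
    ⟨rfl, hx⟩ ⟨rfl, hy⟩

theorem mk_eq_mk_iff {X : CoherentConfiguration Ω} {a b : Ω} :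
    Quot.mk (XTwin X) a = Quot.mk (XTwin X) b ↔ XTwin X a b :=
  (equivalence_xTwin X).quot_mk_eq_iff a b

theorem preimage_mk_singleton {X : CoherentConfiguration Ω} (x : Ω) :
    Quot.mk (XTwin X) ⁻¹' {Quot.mk (XTwin X) x} = {z | XTwin X z x} :=
  Set.ext fun _ => mk_eq_mk_iff

theorem adj_of_xTwin_of_adj {X : CoherentConfiguration Ω} {G : SimpleGraph Ω}
    (hG : X.IsRelation (adjRel G)) {u v w : Ω} (huv : XTwin X u v) (hne : u ≠ v)
    (huw : XTwin X u w) (huw' : G.Adj u w) : G.Adj u v :=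
  ((huw.symm.trans huv).isTwin hG u (G.ne_of_adj huw') hne).1 huw'

end Twins

def quotRel (X : CoherentConfiguration Ω) (s : Set (Ω × Ω)) :
    Set (Quot (XTwin X) × Quot (XTwin X)) :=
  Prod.map (Quot.mk (XTwin X)) (Quot.mk (XTwin X)) '' s

section Quotient

variable {X : CoherentConfiguration Ω}

theorem mk_mem_quotRel {s : Set (Ω × Ω)} {a b : Ω} (h : (a, b) ∈ s) :
    (Quot.mk (XTwin X) a, Quot.mk (XTwin X) b) ∈ quotRel X s :=
  mem_image_of_mem _ h

theorem quotRel_diagRel (Δ : Set Ω) :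
    quotRel X (diagRel Δ) = diagRel (Quot.mk (XTwin X) '' Δ) := by
  ext ⟨c, d⟩
  simp only [quotRel, mem_image, Prod.exists, Prod.map, Prod.mk.injEq, mem_diagRel]
  constructor
  · rintro ⟨x, _, ⟨rfl, hx⟩, rfl, rfl⟩
    exact ⟨rfl, x, hx, rfl⟩
  · rintro ⟨rfl, x, hx, rfl⟩
    exact ⟨x, x, ⟨rfl, hx⟩, rfl, rfl⟩

theorem sUnion_image_quotRel (T : Set (Set (Ω × Ω))) :
    ⋃₀ (quotRel X '' T) = quotRel X (⋃₀ T) :=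
  image_sUnion.symm

theorem swap_quotRel (s : Set (Ω × Ω)) :
    {p | (p.2, p.1) ∈ quotRel X s} = quotRel X {p | (p.2, p.1) ∈ s} := by
  ext ⟨c, d⟩
  constructor
  · rintro ⟨⟨x, y⟩, h, hxy⟩
    simp only [Prod.map, Prod.mk.injEq] at hxy
    obtain ⟨rfl, rfl⟩ := hxy
    exact mk_mem_quotRel (show (y, x) ∈ {p : Ω × Ω | (p.2, p.1) ∈ s} from h)
  · rintro ⟨⟨x, y⟩, h, hxy⟩
    simp only [Prod.map, Prod.mk.injEq] at hxy
    obtain ⟨rfl, rfl⟩ := hxy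
    exact mk_mem_quotRel (X := X) (show (y, x) ∈ s from h)

variable [Finite Ω]

theorem quotRel_eq_diagRel {s : Set (Ω × Ω)} (hs : s ∈ X.S) {a b : Ω} (hab : (a, b) ∈ s)
    (h : XTwin X a b) {Δ : Set Ω} (hΔ : X.IsFiber Δ) (ha : a ∈ Δ) :
    quotRel X s = diagRel (Quot.mk (XTwin X) '' Δ) := by
  ext ⟨c, d⟩
  constructor
  · rintro ⟨⟨x, y⟩, hxy, hcd⟩
    simp only [Prod.map, Prod.mk.injEq] at hcd
    obtain ⟨rfl, rfl⟩ := hcd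
    exact ⟨mk_eq_mk_iff.2 (XTwin.of_mem hs hab h hxy), x, hΔ.fst_mem hs hab ha hxy, rfl⟩
  · rintro ⟨(rfl : c = d), x, hx, rfl⟩
    obtain ⟨y, hxy⟩ := hΔ.exists_mem hs hab ha hx
    have hq := mk_mem_quotRel (X := X) hxy
    rwa [← mk_eq_mk_iff.2 (XTwin.of_mem hs hab h hxy)] at hq

theorem adjRel_quotGraph {G : SimpleGraph Ω} (hG : X.IsRelation (adjRel G)) :
    adjRel (quotGraph G (XTwin X)) = quotRel X (adjRel G \ twinRel X) := by
  ext ⟨c, d⟩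
  obtain ⟨x, rfl⟩ := Quot.exists_rep c
  obtain ⟨y, rfl⟩ := Quot.exists_rep d
  constructor
  · rintro ⟨hne, hadj⟩
    exact mk_mem_quotRel ⟨hadj x y rfl rfl, fun h => hne (mk_eq_mk_iff.2 h)⟩
  · rintro ⟨⟨x', y'⟩, ⟨hadj, hnot⟩, hxy⟩
    simp only [Prod.map, Prod.mk.injEq, mk_eq_mk_iff] at hxy
    refine ⟨fun h => hnot (hxy.1.trans ((mk_eq_mk_iff.1 h).trans hxy.2.symm)), ?_⟩
    intro a b ha hb
    rw [mk_eq_mk_iff] at ha hb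
    exact XTwin.adj_of_adj hG hadj (hxy.1.trans ha.symm) (hxy.2.trans hb.symm)
      fun h => hnot (hxy.1.trans (ha.symm.trans (h.trans (hb.trans hxy.2.symm))))

theorem mk_mem_quotRel_left_iff (hnt : ∃ x y, ¬ XTwin X x y) {r : Set (Ω × Ω)}
    (hr : r ∈ X.S) {a : Ω} {d : Quot (XTwin X)} :
    (Quot.mk (XTwin X) a, d) ∈ quotRel X r ↔ ∃ c, Quot.mk (XTwin X) c = d ∧ (a, c) ∈ r := by
  refine ⟨?_, fun ⟨c, hcd, hac⟩ => hcd ▸ mk_mem_quotRel hac⟩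
  rintro ⟨⟨a₁, c⟩, h, hac⟩
  simp only [Prod.map, Prod.mk.injEq, mk_eq_mk_iff] at hac
  obtain ⟨c', hcc', hac'⟩ := XTwin.exists_mem_of_mem hnt hr h hac.1.symm
  exact ⟨c', hac.2 ▸ mk_eq_mk_iff.2 hcc'.symm, hac'⟩

theorem mk_mem_quotRel_right_iff (hnt : ∃ x y, ¬ XTwin X x y) {s : Set (Ω × Ω)}
    (hs : s ∈ X.S) {b : Ω} {d : Quot (XTwin X)} :
    (d, Quot.mk (XTwin X) b) ∈ quotRel X s ↔ ∃ c, Quot.mk (XTwin X) c = d ∧ (c, b) ∈ s := by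
  have h := mk_mem_quotRel_left_iff hnt (X.swap_mem s hs) (a := b) (d := d)
  rwa [← swap_quotRel] at h

theorem quotRel_eq_of_mem (hnt : ∃ x y, ¬ XTwin X x y) {s s' : Set (Ω × Ω)} (hs : s ∈ X.S)
    (hs' : s' ∈ X.S) {p : Quot (XTwin X) × Quot (XTwin X)} (hp : p ∈ quotRel X s)
    (hp' : p ∈ quotRel X s') :
    quotRel X s = quotRel X s' := by
  obtain ⟨⟨a, b⟩, hab, rfl⟩ := hp
  obtain ⟨⟨a', b'⟩, hab', hp'⟩ := hp'
  simp only [Prod.map, Prod.mk.injEq, mk_eq_mk_iff] at hp'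
  by_cases h : XTwin X a b
  · obtain ⟨Δ, hΔ, ha⟩ := X.exists_isFiber_mem a
    rw [quotRel_eq_diagRel hs hab h hΔ ha, quotRel_eq_diagRel hs' hab'
      (hp'.1.trans (h.trans hp'.2.symm)) hΔ (hp'.1.symm.mem_of_isFiber hnt hΔ ha)]
  · rw [X.eq_of_mem hs hs' hab (XTwin.mem_of_mem hs' hab' hp'.1.symm hp'.2.symm h)]

theorem interNum_quotRel_mk (hnt : ∃ x y, ¬ XTwin X x y) {r s : Set (Ω × Ω)} (hr : r ∈ X.S)
    (hs : s ∈ X.S) (x y : Ω) :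
    interNum (quotRel X r) (quotRel X s) (Quot.mk _ x, Quot.mk _ y) =
      (Quot.mk (XTwin X) '' {c | (x, c) ∈ r ∧ (c, y) ∈ relComp (twinRel X) s}).ncard := by
  unfold interNum
  congr 1
  ext δ
  simp only [mem_ofPred_eq, mem_image, mk_mem_quotRel_left_iff hnt hr]
  constructor
  · rintro ⟨⟨c, rfl, hxc⟩, hcy⟩
    obtain ⟨d, hdc, hdy⟩ := (mk_mem_quotRel_right_iff hnt hs).1 hcy
    exact ⟨c, ⟨hxc, d, (mk_eq_mk_iff.1 hdc).symm, hdy⟩, rfl⟩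
  · rintro ⟨c, ⟨hxc, d, hcd, hdy⟩, rfl⟩
    exact ⟨⟨c, rfl, hxc⟩, (mk_mem_quotRel_right_iff hnt hs).2 ⟨d, mk_eq_mk_iff.2 hcd.symm, hdy⟩⟩

/-- The set `C x y` counted by `interNum_quotRel_mk` has an intersection number of `X` as its
size. Either `r` consists of twins and its image is at most the class of `x`, or `C x y` is a
union of twin classes, all of one size. -/
theorem interNum_quotRel_eq (hnt : ∃ x y, ¬ XTwin X x y) {r s t : Set (Ω × Ω)}
    (hr : r ∈ X.S) (hs : s ∈ X.S) (ht : t ∈ X.S) {a b a' b' : Ω} (hab : (a, b) ∈ t)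
    (hab' : (a', b') ∈ t) :
    interNum (quotRel X r) (quotRel X s) (Quot.mk _ a, Quot.mk _ b) =
      interNum (quotRel X r) (quotRel X s) (Quot.mk _ a', Quot.mk _ b') := by
  let C : Ω → Ω → Set Ω := fun x y => {c | (x, c) ∈ r ∧ (c, y) ∈ relComp (twinRel X) s}
  have hC : (C a b).ncard = (C a' b').ncard :=
    interNum_eq_of_isRelation (isRelation_of_mem hr)
      ((isRelation_twinRel X).relComp (isRelation_of_mem hs)) ht hab hab'
  rw [interNum_quotRel_mk hnt hr hs, interNum_quotRel_mk hnt hr hs]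
  by_cases hre : ∀ p ∈ r, XTwin X p.1 p.2
  · have hsub : ∀ x y, Quot.mk (XTwin X) '' C x y ⊆ {Quot.mk _ x} := by
      rintro x y _ ⟨c, hc, rfl⟩
      exact mk_eq_mk_iff.2 (hre _ hc.1).symm
    have hmem : ∀ x y, Quot.mk _ x ∈ Quot.mk (XTwin X) '' C x y ↔ 0 < (C x y).ncard := by
      refine fun x y => ⟨fun ⟨c, hc, _⟩ => (ncard_pos (toFinite _)).2 ⟨c, hc⟩, fun h => ?_⟩
      obtain ⟨c, hc⟩ := (ncard_pos (toFinite _)).1 h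
      exact ⟨c, hc, mk_eq_mk_iff.2 (hre _ hc.1).symm⟩
    exact ncard_eq_ncard_of_subset_singleton (hsub a b) (hsub a' b') (by rw [hmem, hmem, hC])
  · have hre' : ∀ p ∈ r, ¬ XTwin X p.1 p.2 := fun p hp h =>
      hre fun q hq => XTwin.of_mem hr hp h hq
    obtain ⟨⟨x₀, y₀⟩, h₀⟩ := X.nonempty_of_mem hr
    obtain ⟨Δ, hΔ, hy₀⟩ := X.exists_isFiber_mem y₀
    have hk : ∀ x y, (C x y).ncard =
        {z | XTwin X z y₀}.ncard * (Quot.mk (XTwin X) '' C x y).ncard := by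
      intro x y
      have hsat : Quot.mk (XTwin X) ⁻¹' (Quot.mk _ '' C x y) = C x y := by
        refine subset_antisymm ?_ (subset_preimage_image _ _)
        rintro c' ⟨c, ⟨hxc, d, hcd, hdy⟩, hcc'⟩
        have hc'c : XTwin X c' c := mk_eq_mk_iff.1 hcc'.symm
        exact ⟨XTwin.mem_of_mem hr hxc (XTwin.refl X x) hc'c
          fun h => hre' _ hxc (h.trans hc'c), d, hc'c.trans hcd, hdy⟩
      conv_lhs => rw [← hsat]
      refine ncard_preimage_eq_mul _ ?_
      rintro _ ⟨c, hc, rfl⟩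
      rw [preimage_mk_singleton]
      exact ncard_setOf_xTwin_eq hΔ (hΔ.snd_mem hr h₀ hy₀ hc.1) hy₀
    exact Nat.eq_of_mul_eq_mul_left ((ncard_pos (toFinite _)).2 ⟨y₀, XTwin.refl X y₀⟩)
      ((hk a b).symm.trans (hC.trans (hk a' b')))

variable (X) in
noncomputable def quotient (hnt : ∃ x y, ¬ XTwin X x y) :
    CoherentConfiguration (Quot (XTwin X)) where
  S := quotRel X '' X.S
  isPartition := by
    refine ⟨fun ⟨s, hs, h⟩ => ?_, fun ⟨c, d⟩ => ?_⟩
    · exact ((X.nonempty_of_mem hs).image _ : (quotRel X s).Nonempty).ne_empty h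
    · obtain ⟨x, rfl⟩ := Quot.exists_rep c
      obtain ⟨y, rfl⟩ := Quot.exists_rep d
      obtain ⟨s, hs, hxy⟩ := X.exists_mem (x, y)
      refine ⟨quotRel X s, ⟨mem_image_of_mem _ hs, mk_mem_quotRel hxy⟩, ?_⟩
      rintro _ ⟨⟨s', hs', rfl⟩, hp'⟩
      exact quotRel_eq_of_mem hnt hs' hs hp' (mk_mem_quotRel hxy)
  diag_isRelation := by
    obtain ⟨T, hT, hTd⟩ := X.diag_isRelation
    refine ⟨quotRel X '' T, image_mono hT, ?_⟩
    rw [sUnion_image_quotRel, hTd, quotRel_diagRel, image_univ_of_surjective Quot.mk_surjective]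
  swap_mem := by
    rintro _ ⟨s, hs, rfl⟩
    rw [swap_quotRel]
    exact mem_image_of_mem _ (X.swap_mem s hs)
  coherent := by
    rintro _ ⟨r, hr, rfl⟩ _ ⟨s, hs, rfl⟩ _ ⟨t, ht, rfl⟩ _ ⟨⟨a, b⟩, hab, rfl⟩ _ ⟨⟨a', b'⟩, hab', rfl⟩
    exact interNum_quotRel_eq hnt hr hs ht hab hab'

theorem quotient_isRelation_quotRel (hnt : ∃ x y, ¬ XTwin X x y) {R : Set (Ω × Ω)}
    (hR : X.IsRelation R) :
    (quotient X hnt).IsRelation (quotRel X R) := by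
  obtain ⟨T, hT, rfl⟩ := hR
  exact ⟨quotRel X '' T, image_mono hT, sUnion_image_quotRel T⟩

theorem quotient_isFiber_iff (hnt : ∃ x y, ¬ XTwin X x y) {Φ : Set (Quot (XTwin X))} :
    (quotient X hnt).IsFiber Φ ↔ ∃ Δ, X.IsFiber Δ ∧ Quot.mk (XTwin X) '' Δ = Φ := by
  constructor
  · rintro ⟨s, hs, hsΦ⟩
    obtain ⟨⟨x, y⟩, hxy⟩ := X.nonempty_of_mem hs
    have hq : (Quot.mk (XTwin X) x, Quot.mk (XTwin X) y) ∈ diagRel Φ := hsΦ ▸ mk_mem_quotRel hxy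
    obtain ⟨Δ, hΔ, hx⟩ := X.exists_isFiber_mem x
    refine ⟨Δ, hΔ, diagRel_injective ?_⟩
    rw [← hsΦ, quotRel_eq_diagRel hs hxy (mk_eq_mk_iff.1 hq.1) hΔ hx]
  · rintro ⟨Δ, hΔ, rfl⟩
    exact ⟨diagRel Δ, hΔ, quotRel_diagRel Δ⟩

end Quotient

section Pullback

variable [Finite Ω] {κ : Type*} [Finite κ] {Y : CoherentConfiguration κ} {f : Ω → κ}

variable (f) in
/-- `d` selects the diagonal (`True`) or the off-diagonal (`False`) part of the preimage. -/
def pullbackRel (t : Set (κ × κ)) (d : Prop) : Set (Ω × Ω) :=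
  {p | (f p.1, f p.2) ∈ t ∧ (p.1 = p.2 ↔ d)}

theorem ncard_preimage_paths_eq
    (hf : ∀ Φ, Y.IsFiber Φ → ∀ c ∈ Φ, ∀ d ∈ Φ, (f ⁻¹' {c}).ncard = (f ⁻¹' {d}).ncard)
    {t₁ t₂ t₃ : Set (κ × κ)} (ht₁ : t₁ ∈ Y.S) (ht₂ : t₂ ∈ Y.S) (ht₃ : t₃ ∈ Y.S)
    {w w' : κ × κ} (hw : w ∈ t₃) (hw' : w' ∈ t₃) :
    (f ⁻¹' {c | (w.1, c) ∈ t₁ ∧ (c, w.2) ∈ t₂}).ncard =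
      (f ⁻¹' {c | (w'.1, c) ∈ t₁ ∧ (c, w'.2) ∈ t₂}).ncard := by
  obtain ⟨⟨c₀, d₀⟩, h₀⟩ := Y.nonempty_of_mem ht₁
  obtain ⟨Φ, hΦ, hd₀⟩ := Y.exists_isFiber_mem d₀
  have hcount : ∀ v : κ × κ, (f ⁻¹' {c | (v.1, c) ∈ t₁ ∧ (c, v.2) ∈ t₂}).ncard =
      (f ⁻¹' {d₀}).ncard * interNum t₁ t₂ v := fun v =>
    ncard_preimage_eq_mul f fun c hc => hf Φ hΦ c (hΦ.snd_mem ht₁ h₀ hd₀ hc.1) d₀ hd₀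
  rw [hcount, hcount, Y.coherent _ ht₁ _ ht₂ _ ht₃ _ hw _ hw']

/-- If `d₁` (resp. `d₂`) holds the paths are pinned to `γ = p.1` (resp. `γ = p.2`); otherwise
they are the preimage of the `Y`-paths minus the two endpoints. -/
theorem interNum_pullbackRel_eq
    (hf : ∀ Φ, Y.IsFiber Φ → ∀ c ∈ Φ, ∀ d ∈ Φ, (f ⁻¹' {c}).ncard = (f ⁻¹' {d}).ncard)
    {t₁ t₂ t₃ : Set (κ × κ)} (ht₁ : t₁ ∈ Y.S) (ht₂ : t₂ ∈ Y.S) (ht₃ : t₃ ∈ Y.S)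
    (d₁ d₂ : Prop) {p p' : Ω × Ω} (hp : (f p.1, f p.2) ∈ t₃) (hp' : (f p'.1, f p'.2) ∈ t₃)
    (hpp' : p.1 = p.2 ↔ p'.1 = p'.2) :
    interNum (pullbackRel f t₁ d₁) (pullbackRel f t₂ d₂) p =
      interNum (pullbackRel f t₁ d₁) (pullbackRel f t₂ d₂) p' := by
  obtain ⟨Φ₁, hΦ₁, hp₁⟩ := Y.exists_isFiber_mem (f p.1)
  obtain ⟨Φ₂, hΦ₂, hp₂⟩ := Y.exists_isFiber_mem (f p.2)
  have h₁ : (f p.1, f p.2) ∈ t₁ ↔ (f p'.1, f p'.2) ∈ t₁ := Y.mem_iff_mem ht₁ ht₃ hp hp'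
  have h₂ : (f p.1, f p.2) ∈ t₂ ↔ (f p'.1, f p'.2) ∈ t₂ := Y.mem_iff_mem ht₂ ht₃ hp hp'
  have h₁₁ : (f p.1, f p.1) ∈ t₁ ↔ (f p'.1, f p'.1) ∈ t₁ :=
    Y.mem_iff_mem ht₁ hΦ₁ ⟨rfl, hp₁⟩ ⟨rfl, hΦ₁.fst_mem ht₃ hp hp₁ (p := (f p'.1, f p'.2)) hp'⟩
  have h₂₂ : (f p.2, f p.2) ∈ t₂ ↔ (f p'.2, f p'.2) ∈ t₂ :=
    Y.mem_iff_mem ht₂ hΦ₂ ⟨rfl, hp₂⟩ ⟨rfl, hΦ₂.snd_mem ht₃ hp hp₂ (p := (f p'.1, f p'.2)) hp'⟩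
  unfold interNum
  by_cases hd₁ : d₁
  · refine ncard_eq_ncard_of_subset_singleton (x := p.1) (y := p'.1) ?_ ?_ ?_
    · exact fun γ hγ => ((hγ.1.2.2 hd₁).symm : γ = p.1)
    · exact fun γ hγ => ((hγ.1.2.2 hd₁).symm : γ = p'.1)
    · simp only [pullbackRel, mem_ofPred_eq, h₁₁, h₂, hpp']
  by_cases hd₂ : d₂
  · refine ncard_eq_ncard_of_subset_singleton (x := p.2) (y := p'.2) ?_ ?_ ?_
    · exact fun γ hγ => (hγ.2.2.2 hd₂ : γ = p.2)
    · exact fun γ hγ => (hγ.2.2.2 hd₂ : γ = p'.2)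
    · simp only [pullbackRel, mem_ofPred_eq, h₁, h₂₂, hpp']
  let E : Ω × Ω → Set Ω := fun w => f ⁻¹' {c | (f w.1, c) ∈ t₁ ∧ (c, f w.2) ∈ t₂}
  have hset : ∀ w : Ω × Ω, {γ | (w.1, γ) ∈ pullbackRel f t₁ d₁ ∧ (γ, w.2) ∈ pullbackRel f t₂ d₂}
      = E w \ {w.1, w.2} := by
    intro w
    ext γ
    simp only [pullbackRel, E, mem_ofPred_eq, hd₁, hd₂, iff_false, mem_sdiff, mem_preimage,
      mem_insert_iff, mem_singleton_iff, not_or]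
    exact ⟨fun ⟨⟨h₁, h₂⟩, h₃, h₄⟩ => ⟨⟨h₁, h₃⟩, Ne.symm h₂, h₄⟩,
      fun ⟨⟨h₁, h₃⟩, h₂, h₄⟩ => ⟨⟨h₁, Ne.symm h₂⟩, h₃, h₄⟩⟩
  have hE : (E p).ncard = (E p').ncard := ncard_preimage_paths_eq hf ht₁ ht₂ ht₃ hp hp'
  have hends : (E p ∩ {p.1, p.2}).ncard = (E p' ∩ {p'.1, p'.2}).ncard :=
    ncard_inter_pair_eq (by simp only [E, mem_preimage, mem_ofPred_eq, h₁₁, h₂])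
      (by simp only [E, mem_preimage, mem_ofPred_eq, h₁, h₂₂]) hpp'
  have hsplit := ncard_inter_add_ncard_sdiff_eq_ncard (E p) {p.1, p.2}
  have hsplit' := ncard_inter_add_ncard_sdiff_eq_ncard (E p') {p'.1, p'.2}
  rw [hset, hset]
  omega

variable (Y f) in
noncomputable def pullback
    (hf : ∀ Φ, Y.IsFiber Φ → ∀ c ∈ Φ, ∀ d ∈ Φ, (f ⁻¹' {c}).ncard = (f ⁻¹' {d}).ncard) :
    CoherentConfiguration Ω where
  S := {z | ∃ t ∈ Y.S, ∃ p : Ω × Ω, (f p.1, f p.2) ∈ t ∧ z = pullbackRel f t (p.1 = p.2)}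
  isPartition := by
    refine ⟨fun ⟨t, ht, p, hp, h⟩ => (h ▸ ⟨hp, Iff.rfl⟩ : p ∈ (∅ : Set (Ω × Ω))), fun p => ?_⟩
    obtain ⟨t, ht, hp⟩ := Y.exists_mem (f p.1, f p.2)
    refine ⟨pullbackRel f t (p.1 = p.2), ⟨⟨t, ht, p, hp, rfl⟩, hp, Iff.rfl⟩, ?_⟩
    rintro _ ⟨⟨t', ht', q, -, rfl⟩, hpt', hpq⟩
    rw [Y.eq_of_mem ht' ht hpt' hp, propext hpq]
  diag_isRelation := by
    refine ⟨{z | ∃ t ∈ Y.S, ∃ p : Ω × Ω, (f p.1, f p.2) ∈ t ∧ p.1 = p.2 ∧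
      z = pullbackRel f t (p.1 = p.2)}, ?_, ?_⟩
    · rintro z ⟨t, ht, p, hp, -, hz⟩
      exact ⟨t, ht, p, hp, hz⟩
    ext ⟨x, y⟩
    simp only [mem_sUnion, mem_ofPred_eq, mem_diagRel, mem_univ, and_true]
    constructor
    · rintro ⟨_, ⟨t, -, p, -, hp, rfl⟩, -, hxy⟩
      exact hxy.2 hp
    · rintro rfl
      obtain ⟨t, ht, hx⟩ := Y.exists_mem (f x, f x)
      exact ⟨_, ⟨t, ht, (x, x), hx, rfl, rfl⟩, hx, Iff.rfl⟩
  swap_mem := by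
    rintro _ ⟨t, ht, p, hp, rfl⟩
    refine ⟨_, Y.swap_mem t ht, p.swap, hp, ?_⟩
    ext q
    simp only [pullbackRel, mem_ofPred_eq, Prod.fst_swap, Prod.snd_swap, eq_comm]
  coherent := by
    rintro _ ⟨t₁, ht₁, -, -, rfl⟩ _ ⟨t₂, ht₂, -, -, rfl⟩ _ ⟨t₃, ht₃, q, -, rfl⟩ p ⟨hp, hpq⟩ p'
      ⟨hp', hp'q⟩
    exact interNum_pullbackRel_eq hf ht₁ ht₂ ht₃ _ _ hp hp' (hpq.trans hp'q.symm)

theorem pullback_isRelation_iff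
    {hf : ∀ Φ, Y.IsFiber Φ → ∀ c ∈ Φ, ∀ d ∈ Φ, (f ⁻¹' {c}).ncard = (f ⁻¹' {d}).ncard}
    {R : Set (Ω × Ω)} :
    (pullback Y f hf).IsRelation R ↔ ∀ t ∈ Y.S, ∀ p q : Ω × Ω, (f p.1, f p.2) ∈ t →
      (f q.1, f q.2) ∈ t → (p.1 = p.2 ↔ q.1 = q.2) → p ∈ R → q ∈ R := by
  rw [isRelation_iff]
  constructor
  · intro h t ht p q hp hq hpq hpR
    exact h _ ⟨t, ht, p, hp, rfl⟩ p ⟨hp, Iff.rfl⟩ hpR ⟨hq, hpq.symm⟩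
  · rintro h _ ⟨t, ht, r, -, rfl⟩ p ⟨hp, hpr⟩ hpR q ⟨hq, hqr⟩
    exact h t ht p q hp hq (hpr.trans hqr.symm) hpR

end Pullback

section Reduction

variable [Finite Ω] {X : CoherentConfiguration Ω} {Y : CoherentConfiguration (Quot (XTwin X))}

theorem mem_of_isFiber_of_mk_mem (hnt : ∃ x y, ¬ XTwin X x y)
    (hYΔ : ∀ Δ, X.IsFiber Δ → Y.IsRelation (diagRel (Quot.mk (XTwin X) '' Δ)))
    {Φ : Set (Quot (XTwin X))} (hΦ : Y.IsFiber Φ) {x u : Ω} (hx : Quot.mk _ x ∈ Φ)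
    (hu : Quot.mk _ u ∈ Φ) {Δ : Set Ω} (hΔ : X.IsFiber Δ) (hxΔ : x ∈ Δ) : u ∈ Δ := by
  have hsub : diagRel Φ ⊆ diagRel (Quot.mk (XTwin X) '' Δ) :=
    (hYΔ Δ hΔ).subset hΦ (p := (Quot.mk _ x, Quot.mk _ x)) ⟨rfl, hx⟩ ⟨rfl, x, hxΔ, rfl⟩
  obtain ⟨w, hw, hwu⟩ := (hsub (⟨rfl, hu⟩ : (Quot.mk _ u, Quot.mk _ u) ∈ diagRel Φ)).2
  exact (mk_eq_mk_iff.1 hwu).mem_of_isFiber hnt hΔ hw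

theorem ncard_preimage_mk_eq (hnt : ∃ x y, ¬ XTwin X x y)
    (hYΔ : ∀ Δ, X.IsFiber Δ → Y.IsRelation (diagRel (Quot.mk (XTwin X) '' Δ)))
    {Φ : Set (Quot (XTwin X))} (hΦ : Y.IsFiber Φ) {c : Quot (XTwin X)} (hc : c ∈ Φ)
    {d : Quot (XTwin X)} (hd : d ∈ Φ) :
    (Quot.mk (XTwin X) ⁻¹' {c}).ncard = (Quot.mk (XTwin X) ⁻¹' {d}).ncard := by
  obtain ⟨x, rfl⟩ := Quot.exists_rep c
  obtain ⟨u, rfl⟩ := Quot.exists_rep d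
  obtain ⟨Δ, hΔ, hxΔ⟩ := X.exists_isFiber_mem x
  rw [preimage_mk_singleton, preimage_mk_singleton]
  exact ncard_setOf_xTwin_eq hΔ hxΔ (mem_of_isFiber_of_mk_mem hnt hYΔ hΦ hc hd hΔ hxΔ)

variable (Y) in
noncomputable def twinPullback (hnt : ∃ x y, ¬ XTwin X x y)
    (hYΔ : ∀ Δ, X.IsFiber Δ → Y.IsRelation (diagRel (Quot.mk (XTwin X) '' Δ))) :
    CoherentConfiguration Ω :=
  pullback Y (Quot.mk _) fun _ hΦ _ hc _ hd => ncard_preimage_mk_eq hnt hYΔ hΦ hc hd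

theorem twinPullback_isRelation_adjRel (hnt : ∃ x y, ¬ XTwin X x y)
    (hYΔ : ∀ Δ, X.IsFiber Δ → Y.IsRelation (diagRel (Quot.mk (XTwin X) '' Δ)))
    {G : SimpleGraph Ω} (hG : X.IsRelation (adjRel G))
    (hYG : Y.IsRelation (adjRel (quotGraph G (XTwin X)))) :
    (twinPullback Y hnt hYΔ).IsRelation (adjRel G) := by
  refine pullback_isRelation_iff.2 fun t ht ⟨x, y⟩ ⟨u, v⟩ hxyt huvt hxyuv hxy => ?_
  have huv : u ≠ v := fun h => G.ne_of_adj hxy (hxyuv.2 h)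
  by_cases htw : XTwin X x y
  · -- the class of `x` is a clique, hence so is every class in the fiber of `x`
    have hxx : (Quot.mk (XTwin X) x, Quot.mk (XTwin X) x) ∈ t := mk_eq_mk_iff.2 htw ▸ hxyt
    have hmk : Quot.mk (XTwin X) u = Quot.mk _ v := Y.fst_eq_snd_of_mem ht hxx huvt
    have hΦ : Y.IsFiber {c | (c, c) ∈ t} := by
      rw [IsFiber, ← Y.eq_diagRel_of_mem ht hxx]
      exact ht
    obtain ⟨Δ, hΔ, hxΔ⟩ := X.exists_isFiber_mem x
    have huΔ : u ∈ Δ :=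
      mem_of_isFiber_of_mk_mem hnt hYΔ hΦ hxx (show (_, _) ∈ t from hmk ▸ huvt) hΔ hxΔ
    obtain ⟨s, hs, hxys⟩ := X.exists_mem (x, y)
    obtain ⟨w, huw⟩ := hΔ.exists_mem hs hxys hxΔ huΔ
    exact adj_of_xTwin_of_adj hG (mk_eq_mk_iff.1 hmk) huv (XTwin.of_mem hs hxys htw huw)
      (hG.subset hs hxys hxy huw)
  · have hq : (Quot.mk (XTwin X) x, Quot.mk (XTwin X) y) ∈ adjRel (quotGraph G (XTwin X)) := by
      rw [adjRel_quotGraph hG]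
      exact mk_mem_quotRel ⟨hxy, htw⟩
    exact (hYG.subset ht hxyt hq huvt).2 u v rfl rfl

theorem twinPullback_isRelation_diagRel (hnt : ∃ x y, ¬ XTwin X x y)
    (hYΔ : ∀ Δ, X.IsFiber Δ → Y.IsRelation (diagRel (Quot.mk (XTwin X) '' Δ)))
    {Δ : Set Ω} (hΔ : X.IsFiber Δ) : (twinPullback Y hnt hYΔ).IsRelation (diagRel Δ) := by
  refine pullback_isRelation_iff.2 fun t ht ⟨x, y⟩ ⟨u, v⟩ hxyt huvt hxyuv ⟨hxy, hxΔ⟩ => ?_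
  obtain rfl : x = y := hxy
  obtain rfl : u = v := hxyuv.1 rfl
  have hΦ : Y.IsFiber {c | (c, c) ∈ t} := by
    rw [IsFiber, ← Y.eq_diagRel_of_mem ht hxyt]
    exact ht
  exact ⟨rfl, mem_of_isFiber_of_mk_mem hnt hYΔ hΦ hxyt huvt hΔ hxΔ⟩

theorem isRelation_quotRel_of_CCle_twinPullback (hnt : ∃ x y, ¬ XTwin X x y)
    (hYΔ : ∀ Δ, X.IsFiber Δ → Y.IsRelation (diagRel (Quot.mk (XTwin X) '' Δ)))
    (hXZ : CCle X (twinPullback Y hnt hYΔ)) {s : Set (Ω × Ω)} (hs : s ∈ X.S) :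
    Y.IsRelation (quotRel X s) := by
  obtain ⟨⟨a, b⟩, hab⟩ := X.nonempty_of_mem hs
  by_cases htw : XTwin X a b
  · obtain ⟨Δ, hΔ, ha⟩ := X.exists_isFiber_mem a
    rw [quotRel_eq_diagRel hs hab htw hΔ ha]
    exact hYΔ Δ hΔ
  have hZ := pullback_isRelation_iff.1 (hXZ s (isRelation_of_mem hs))
  refine isRelation_iff.2 fun t ht _ hpt ⟨⟨x, y⟩, hxy, hp⟩ q hqt => ?_
  subst hp
  obtain ⟨⟨u, v⟩, rfl⟩ : ∃ w : Ω × Ω, Prod.map (Quot.mk _) (Quot.mk _) w = q :=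
    ⟨(q.1.out, q.2.out), by simp⟩
  have hnxy : ¬ XTwin X x y := fun h => htw (XTwin.of_mem hs hxy h hab)
  have hne : x ≠ y := fun h => hnxy (h ▸ XTwin.refl X x)
  have huv : u ≠ v := by
    rintro rfl
    exact hnxy (mk_eq_mk_iff.1 (Y.fst_eq_snd_of_mem ht hqt hpt))
  exact mk_mem_quotRel (hZ t ht (x, y) (u, v) hpt hqt (iff_of_false hne huv) hxy)

theorem S_eq_quotient_S {G : SimpleGraph Ω} (hnt : ∃ x y, ¬ XTwin X x y)
    (hWL : IsWLPart G {Δ | X.IsFiber Δ} X)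
    (hY : IsWLPart (quotGraph G (XTwin X))
      ((fun Δ => Quot.mk (XTwin X) '' Δ) '' {Δ | X.IsFiber Δ}) Y) :
    Y.S = (quotient X hnt).S := by
  have hYΔ : ∀ Δ, X.IsFiber Δ → Y.IsRelation (diagRel (Quot.mk (XTwin X) '' Δ)) :=
    fun Δ hΔ => hY.2.1 _ ⟨Δ, hΔ, rfl⟩
  have hXZ : CCle X (twinPullback Y hnt hYΔ) :=
    hWL.2.2 _ (twinPullback_isRelation_adjRel hnt hYΔ hWL.1 hY.1)
      fun Δ hΔ => twinPullback_isRelation_diagRel hnt hYΔ hΔ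
  refine CCle.S_eq (hY.2.2 _ ?_ ?_) (CCle.of_forall_isRelation ?_)
  · rw [adjRel_quotGraph hWL.1]
    exact quotient_isRelation_quotRel hnt (hWL.1.diff (isRelation_twinRel X))
  · rintro _ ⟨Δ, hΔ, rfl⟩
    rw [← quotRel_diagRel]
    exact quotient_isRelation_quotRel hnt (isRelation_of_mem hΔ)
  · rintro _ ⟨s, hs, rfl⟩
    exact isRelation_quotRel_of_CCle_twinPullback hnt hYΔ hXZ hs

end Reduction

section Subsingleton

variable {κ : Type*} [Subsingleton κ]

theorem CoherentConfiguration.S_eq_setOf_nonempty (Y : CoherentConfiguration κ) :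
    Y.S = {s | s.Nonempty} := by
  ext s
  refine ⟨Y.nonempty_of_mem, fun ⟨p, hp⟩ => ?_⟩
  obtain ⟨t, ht, hpt⟩ := Y.exists_mem p
  rwa [Nonempty.eq_univ ⟨p, hp⟩, ← Nonempty.eq_univ ⟨p, hpt⟩]

theorem CoherentConfiguration.isFiber_iff_nonempty {Y : CoherentConfiguration κ} {Φ : Set κ} :
    Y.IsFiber Φ ↔ Φ.Nonempty := by
  rw [IsFiber, S_eq_setOf_nonempty]
  exact ⟨fun ⟨p, hp⟩ => ⟨p.1, hp.2⟩, fun ⟨c, hc⟩ => ⟨(c, c), rfl, hc⟩⟩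

theorem image_S_eq_setOf_nonempty (X : CoherentConfiguration Ω) {f : Ω → κ}
    (hf : Function.Surjective f) :
    (fun s => Prod.map f f '' s) '' X.S = {s | s.Nonempty} := by
  ext s
  constructor
  · rintro ⟨s', hs', rfl⟩
    exact (X.nonempty_of_mem hs').image _
  · rintro ⟨⟨c, d⟩, hcd⟩
    obtain ⟨x, rfl⟩ := hf c
    obtain ⟨y, rfl⟩ := hf d
    obtain ⟨s', hs', hxy⟩ := X.exists_mem (x, y)
    exact ⟨s', hs', (Nonempty.eq_univ ⟨_, mem_image_of_mem _ hxy⟩).trans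
      (Nonempty.eq_univ ⟨_, hcd⟩).symm⟩

theorem image_isFiber_eq_setOf_nonempty (X : CoherentConfiguration Ω) {f : Ω → κ}
    (hf : Function.Surjective f) :
    (fun Δ => f '' Δ) '' {Δ | X.IsFiber Δ} = {Φ | Φ.Nonempty} := by
  ext Φ
  constructor
  · rintro ⟨Δ, hΔ, rfl⟩
    obtain ⟨⟨x, _⟩, -, hx⟩ := X.nonempty_of_mem hΔ
    exact ⟨f x, mem_image_of_mem f hx⟩
  · rintro ⟨c, hc⟩
    obtain ⟨x, rfl⟩ := hf c
    obtain ⟨Δ, hΔ, hx⟩ := X.exists_isFiber_mem x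
    exact ⟨Δ, hΔ, (Nonempty.eq_univ ⟨_, mem_image_of_mem f hx⟩).trans
      (Nonempty.eq_univ ⟨_, hc⟩).symm⟩

end Subsingleton

theorem subsingleton_quot_xTwin {X : CoherentConfiguration Ω}
    (h : ∀ x y, XTwin X x y) : Subsingleton (Quot (XTwin X)) :=
  ⟨Quot.ind fun x => Quot.ind fun y => Quot.sound (h x y)⟩

/-- Reducing twins: for a correct partition `π` of `G` and
`X = WL(G)_π` with twin parabolic `e = e_X`: `e` is a twin equivalence of `G`,
`WL(G)_π / e = WL(G/e)_{π/e}`, and `π/e` is a correct partition of `G/e`. -/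
theorem stmt_14 {Ω : Type u} [Fintype Ω] (G : SimpleGraph Ω)
    (π : Set (Set Ω)) (X : CoherentConfiguration Ω)
    (hWL : IsWLPart G π X) (hcorrect : π = {Δ | X.IsFiber Δ})
    (Y : CoherentConfiguration (Quot (XTwin X)))
    (hY : IsWLPart (quotGraph G (XTwin X))
      ((fun Δ => Quot.mk (XTwin X) '' Δ) '' π) Y) :
    (IsEquivSet (twinRel X) ∧ ∀ a b : Ω, XTwin X a b → IsTwin G a b) ∧
      Y.S = (fun s => Prod.map (Quot.mk (XTwin X)) (Quot.mk (XTwin X)) '' s) '' X.S ∧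
      (fun Δ => Quot.mk (XTwin X) '' Δ) '' π = {Δ | Y.IsFiber Δ} := by
  subst hcorrect
  refine ⟨⟨isEquivSet_twinRel X, fun a b h => h.isTwin hWL.1⟩, ?_⟩
  by_cases htriv : ∀ x y, XTwin X x y
  · have := subsingleton_quot_xTwin htriv
    rw [Y.S_eq_setOf_nonempty, image_S_eq_setOf_nonempty X Quot.mk_surjective,
      image_isFiber_eq_setOf_nonempty X Quot.mk_surjective]
    exact ⟨rfl, Set.ext fun Φ => isFiber_iff_nonempty.symm⟩
  · simp only [not_forall] at htriv
    have hS := S_eq_quotient_S htriv hWL hY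
    refine ⟨hS, Set.ext fun Φ => ?_⟩
    change _ ↔ diagRel Φ ∈ Y.S
    rw [hS]
    exact (quotient_isFiber_iff htriv).symm
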